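/- arXiv:2505.09130 — 2 statements merged into one kernel-verified Lean document; each statement's English description precedes it below -/
import Mathlib

section
/- Let V₅ have basis e₄, e₂, e₀, e₋₂, e₋₄. Define the linear map φ : ℂ⁷ → Λ²V₅ sending (a₆, a₄, a₂, a₀, a₋₂, a₋₄, a₋₆) to a₆·e₄∧e₂ + 2a₄·e₄∧e₀ + a₂·(e₂∧e₀ + 3e₄∧e₋₂) + 2a₀·(e₂∧e₋₂ + 2e₄∧e₋₄) + a₋₂·(e₀∧e₋₂ + 3e₂∧e₋₄) + 2a₋₄·e₀∧e₋₄ + a₋₆·e₋₂∧e₋₄. Then φ(a) ∧ φ(a) = 0 in Λ⁴V₅ if and only if the following five quadrics vanish: a₆a₋₂ − 4a₄a₀ + 3a₂², a₆a₋₄ − 3a₄a₋₂ + 2a₂a₀, a₆a₋₆ − 9a₂a₋₂ + 8a₀², a₄a₋₆ − 3a₂a₋₄ + 2a₀a₋₂, a₂a₋₆ − 4a₀a₋₄ + 3a₋₂². -/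
/-!
Writing `φ(a) = ∑_{i<j} c i j • eᵢ ∧ eⱼ`, the square of a bivector in five variables is
`2 ∑ₖ Pfₖ(c) • e_{[5] ∖ {k}}`, where `Pfₖ(c)` is the Pfaffian of the principal `4 × 4` minor
avoiding `k`. For the coefficient matrix of `φ` these five Pfaffians are, up to the factors `1`
and `2`, the five quadrics, and the five wedges `e_{[5] ∖ {k}}` are part of a basis of the
exterior algebra.
-/

open ExteriorAlgebra Module

namespace ExteriorAlgebra

variable {R M : Type*} [CommRing R] [AddCommGroup M] [Module R M]

theorem ι_mul_ι_anticomm (m n : M) : ι R m * ι R n = -(ι R n * ι R m) :=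
  eq_neg_of_add_eq_zero_left (ι_add_mul_swap m n)

theorem mul_ι_mul_ι_anticomm (x : ExteriorAlgebra R M) (m n : M) :
    x * ι R m * ι R n = -(x * ι R n * ι R m) := by
  rw [mul_assoc, ι_mul_ι_anticomm m n, mul_neg, mul_assoc]

theorem mul_ι_mul_ι_self (x : ExteriorAlgebra R M) (m : M) : x * ι R m * ι R m = 0 := by
  rw [mul_assoc, ι_sq_zero, mul_zero]

def bivector {n : ℕ} (v : Fin n → M) (c : Matrix (Fin n) (Fin n) R) : ExteriorAlgebra R M :=
  ∑ i, ∑ j, if i < j then c i j • (ι R (v i) * ι R (v j)) else 0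

/-- The Pfaffian of the skew-symmetric matrix whose upper triangle is that of `c`. -/
def pfaffian4 (c : Matrix (Fin 4) (Fin 4) R) : R :=
  c 0 1 * c 2 3 - c 0 2 * c 1 3 + c 0 3 * c 1 2

theorem bivector_mul_self_fin5 (v : Fin 5 → M) (c : Matrix (Fin 5) (Fin 5) R) :
    bivector v c * bivector v c = ∑ k : Fin 5,
      (2 * pfaffian4 (c.submatrix k.succAbove k.succAbove)) • ιMulti R 4 (v ∘ k.succAbove) := by
  -- The side conditions `j < i` let `simp` sort every product of generators by index, which
  -- leaves only the five wedges `v_{[5] ∖ {k}}`.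
  have sort {i j : Fin 5} (_ : j < i) (x : ExteriorAlgebra R M) :
      x * ι R (v i) * ι R (v j) = -(x * ι R (v j) * ι R (v i)) := mul_ι_mul_ι_anticomm x _ _
  have sort₀ {i j : Fin 5} (_ : j < i) : ι R (v i) * ι R (v j) = -(ι R (v j) * ι R (v i)) :=
    ι_mul_ι_anticomm _ _
  simp only [bivector, pfaffian4, Fin.sum_univ_five, ιMulti_apply, List.ofFn_succ, List.ofFn_zero,
    List.prod_cons, List.prod_nil, mul_one, Function.comp_apply, Matrix.submatrix_apply]
  simp only [Fin.isValue, lt_self_iff_false, ↓reduceIte, zero_lt_one, zero_add, Fin.reduceLT,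
    not_lt_zero, add_zero, Fin.lt_one_iff, Fin.reduceEq, mul_add, Algebra.mul_smul_comm,
    ← mul_assoc, add_mul, Algebra.smul_mul_assoc, sort, ι_sq_zero, zero_mul, neg_zero, smul_zero,
    sort₀, neg_mul, neg_neg, mul_ι_mul_ι_self, smul_add, smul_neg, Fin.succAbove, Nat.reduceAdd,
    Fin.castSucc_zero, Fin.succ_zero_eq_one, Fin.castSucc_one, Fin.succ_one_eq_two,
    Fin.reduceCastSucc, Fin.reduceSucc]
  module

theorem linearIndependent_ιMulti_comp_orderEmbedding {I κ : Type*} [LinearOrder I] {n : ℕ}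
    (b : Basis I R M) {f : κ → (Fin n ↪o I)} (hf : Function.Injective f) :
    LinearIndependent R fun k => ιMulti R n (b ∘ f k) := by
  have h := b.ExteriorAlgebra.linearIndependent.comp
    (fun k => ((Set.powersetCard.ofFinEmbEquiv (f k) : Set.powersetCard I n) : Finset I))
    fun k k' hk => hf (Set.powersetCard.ofFinEmbEquiv.injective (Subtype.ext hk))
  convert h using 1
  ext k
  simp [basis_apply_powersetCard, ιMulti_family]

theorem sum_smul_ιMulti_succAbove_eq_zero_iff {n : ℕ} (b : Basis (Fin (n + 1)) R M)
    (g : Fin (n + 1) → R) : ∑ k, g k • ιMulti R n (b ∘ k.succAbove) = 0 ↔ ∀ k, g k = 0 := by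
  refine ⟨Fintype.linearIndependent_iff.mp ?_ g, fun h => by simp [h]⟩
  refine linearIndependent_ιMulti_comp_orderEmbedding b (f := Fin.succAboveOrderEmb)
    fun k k' h => ?_
  simpa [Fin.range_succAboveOrderEmb] using congrArg Set.range (congrArg DFunLike.coe h)

end ExteriorAlgebra

/-- With basis `e 0 = e₄, e 1 = e₂, e 2 = e₀, e 3 = e₋₂, e 4 = e₋₄` of `V₅`, the bivector
`φ(a) = a₆·e₄∧e₂ + 2a₄·e₄∧e₀ + a₂·(e₂∧e₀ + 3e₄∧e₋₂) + 2a₀·(e₂∧e₋₂ + 2e₄∧e₋₄)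
 + a₋₂·(e₀∧e₋₂ + 3e₂∧e₋₄) + 2a₋₄·e₀∧e₋₄ + a₋₆·e₋₂∧e₋₄`
satisfies `φ(a) ∧ φ(a) = 0` iff the five quadrics vanish. -/
theorem stmt_4 (V : Type*) [AddCommGroup V] [Module ℂ V] (e : Module.Basis (Fin 5) ℂ V)
    (a₆ a₄ a₂ a₀ am₂ am₄ am₆ : ℂ) :
    (a₆ • (ι ℂ (e 0) * ι ℂ (e 1)) + (2 * a₄) • (ι ℂ (e 0) * ι ℂ (e 2)) +
        a₂ • (ι ℂ (e 1) * ι ℂ (e 2) + (3 : ℂ) • (ι ℂ (e 0) * ι ℂ (e 3))) +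
        (2 * a₀) • (ι ℂ (e 1) * ι ℂ (e 3) + (2 : ℂ) • (ι ℂ (e 0) * ι ℂ (e 4))) +
        am₂ • (ι ℂ (e 2) * ι ℂ (e 3) + (3 : ℂ) • (ι ℂ (e 1) * ι ℂ (e 4))) +
        (2 * am₄) • (ι ℂ (e 2) * ι ℂ (e 4)) + am₆ • (ι ℂ (e 3) * ι ℂ (e 4))) *
      (a₆ • (ι ℂ (e 0) * ι ℂ (e 1)) + (2 * a₄) • (ι ℂ (e 0) * ι ℂ (e 2)) +
        a₂ • (ι ℂ (e 1) * ι ℂ (e 2) + (3 : ℂ) • (ι ℂ (e 0) * ι ℂ (e 3))) +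
        (2 * a₀) • (ι ℂ (e 1) * ι ℂ (e 3) + (2 : ℂ) • (ι ℂ (e 0) * ι ℂ (e 4))) +
        am₂ • (ι ℂ (e 2) * ι ℂ (e 3) + (3 : ℂ) • (ι ℂ (e 1) * ι ℂ (e 4))) +
        (2 * am₄) • (ι ℂ (e 2) * ι ℂ (e 4)) + am₆ • (ι ℂ (e 3) * ι ℂ (e 4))) = 0 ↔
    (a₆ * am₂ - 4 * a₄ * a₀ + 3 * a₂ ^ 2 = 0 ∧
     a₆ * am₄ - 3 * a₄ * am₂ + 2 * a₂ * a₀ = 0 ∧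
     a₆ * am₆ - 9 * a₂ * am₂ + 8 * a₀ ^ 2 = 0 ∧
     a₄ * am₆ - 3 * a₂ * am₄ + 2 * a₀ * am₂ = 0 ∧
     a₂ * am₆ - 4 * a₀ * am₄ + 3 * am₂ ^ 2 = 0) := by
  let c : Matrix (Fin 5) (Fin 5) ℂ :=
    !![0, a₆, 2 * a₄, 3 * a₂, 4 * a₀;
       0, 0, a₂, 2 * a₀, 3 * am₂;
       0, 0, 0, am₂, 2 * am₄;
       0, 0, 0, 0, am₆;
       0, 0, 0, 0, 0]
  convert_to ∑ k : Fin 5, (2 * pfaffian4 (c.submatrix k.succAbove k.succAbove)) •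
      ιMulti ℂ 4 (e ∘ k.succAbove) = 0 ↔ _ using 2
  · rw [← bivector_mul_self_fin5]
    refine congrArg (fun ω => ω * ω) ?_
    simp only [bivector, c, Fin.sum_univ_five, Fin.isValue, Matrix.of_apply, Matrix.cons_val',
      Matrix.cons_val_fin_one, Matrix.cons_val_zero, Matrix.cons_val_one, Matrix.cons_val,
      Fin.reduceLT, Fin.reduceEq, Fin.lt_one_iff, one_ne_zero, not_lt_zero, lt_self_iff_false,
      ↓reduceIte, add_zero, zero_add]
    module
  rw [sum_smul_ιMulti_succAbove_eq_zero_iff]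
  simp only [Fin.forall_fin_succ, IsEmpty.forall_iff, and_true, pfaffian4, c, Fin.isValue,
    Matrix.submatrix_apply, Fin.succAbove, Fin.castSucc_zero, Fin.succ_zero_eq_one,
    Fin.castSucc_one, Fin.succ_one_eq_two, Fin.reduceCastSucc, Fin.reduceSucc, Matrix.of_apply,
    Matrix.cons_val', Matrix.cons_val_fin_one, Matrix.cons_val_zero, Matrix.cons_val_one,
    Matrix.cons_val, Fin.succ_pos, Fin.lt_one_iff, Fin.reduceEq, Fin.reduceLT, not_lt_zero,
    lt_self_iff_false, ↓reduceIte, mul_eq_zero, OfNat.ofNat_ne_zero, false_or]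
  constructor
  · rintro ⟨h₀, h₁, h₂, h₃, h₄⟩
    exact ⟨by linear_combination h₄, by linear_combination h₃ / 2, by linear_combination h₂,
      by linear_combination h₁ / 2, by linear_combination h₀⟩
  · rintro ⟨q₁, q₂, q₃, q₄, q₅⟩
    exact ⟨by linear_combination q₅, by linear_combination 2 * q₄, by linear_combination q₃,
      by linear_combination 2 * q₂, by linear_combination q₁⟩
end

section
/- Let V be an n-dimensional complex vector space with basis e₁, …, e_n, and let a torus ℂ* act diagonally with pairwise distinct integer weights w₁, …, w_n. Suppose that every integer occurs at most twice in the multiset {w_i + w_j : 1 ≤ i < j ≤ n}. If W ⊂ V is a 2-dimensional subspace whose line Λ²W ⊂ Λ²V is fixed by the induced ℂ*-action, then W = span(e_i, e_j) for some i < j. -/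
/-!
If `Λ²W` is `ℂ*`-stable then, evaluating at `t = 2`, every nonzero Plücker coordinate
`p_kl(x, y)` of `W` is an eigenvector for the same eigenvalue, so all of them have the same
weight `w_k + w_l`. Pick `p_ij ≠ 0` (it exists since `x, y` are independent). For `k ∉ {i, j}`
the weights `w_i + w_k` and `w_j + w_k` differ from `w_i + w_j`, so `p_ik = p_jk = 0`, and the
identity `p_ij x_k = x_j p_ik - x_i p_jk` forces `x_k = y_k = 0`. Hence `W ⊆ span(e_i, e_j)`,
with equality by dimension.
-/

open ExteriorAlgebra

namespace Module.Basis

section CommRing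

variable {κ R V : Type*} [CommRing R] [AddCommGroup V] [Module R V] (b : Basis κ R V)

noncomputable def plucker (x y : V) (i j : κ) : R :=
  b.repr x i * b.repr y j - b.repr x j * b.repr y i

noncomputable def pluckerForm (i j : κ) : _root_.ExteriorAlgebra R V →ₗ[R] R :=
  liftAlternating <| Pi.single 2 <|
    Matrix.detRowAlternating.compLinearMap (LinearMap.pi ![b.coord i, b.coord j])

theorem pluckerForm_ι_mul_ι (i j : κ) (x y : V) :
    b.pluckerForm i j (ι R x * ι R y) = b.plucker x y i j := by
  rw [pluckerForm, liftAlternating_ι_mul, liftAlternating_ι, Pi.single_eq_same]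
  change Matrix.det (Matrix.of fun k => LinearMap.pi ![b.coord i, b.coord j] (![x, y] k)) = _
  simp [Matrix.det_fin_two, plucker]

theorem plucker_eq_mul_of_ι_mul_ι_eq_smul {x y x' y' : V} {c : R}
    (h : ι R x' * ι R y' = c • (ι R x * ι R y)) (i j : κ) :
    b.plucker x' y' i j = c * b.plucker x y i j := by
  simpa [pluckerForm_ι_mul_ι] using congrArg (b.pluckerForm i j) h

theorem repr_apply_of_apply_eq_smul {ρ : V →ₗ[R] V} {d : κ → R}
    (hρ : ∀ i, ρ (b i) = d i • b i) (v : V) (k : κ) :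
    b.repr (ρ v) k = d k * b.repr v k := by
  have : (b.coord k).comp ρ = d k • b.coord k := b.ext fun i => by
    by_cases h : i = k <;> simp [hρ, h]
  exact LinearMap.congr_fun this v

theorem plucker_map_of_apply_eq_smul {ρ : V →ₗ[R] V} {d : κ → R}
    (hρ : ∀ i, ρ (b i) = d i • b i) (x y : V) (k l : κ) :
    b.plucker (ρ x) (ρ y) k l = d k * d l * b.plucker x y k l := by
  simp only [plucker, b.repr_apply_of_apply_eq_smul hρ]
  ring

theorem mul_eq_mul_of_plucker_ne_zero [NoZeroDivisors R] {ρ : V →ₗ[R] V} {d : κ → R}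
    (hρ : ∀ i, ρ (b i) = d i • b i) {x y : V} {c : R}
    (hfix : ι R (ρ x) * ι R (ρ y) = c • (ι R x * ι R y)) {i j k l : κ}
    (hij : b.plucker x y i j ≠ 0) (hkl : b.plucker x y k l ≠ 0) :
    d k * d l = d i * d j := by
  have hc (p q : κ) : d p * d q * b.plucker x y p q = c * b.plucker x y p q :=
    (b.plucker_map_of_apply_eq_smul hρ x y p q).symm.trans
      (b.plucker_eq_mul_of_ι_mul_ι_eq_smul hfix p q)
  exact (mul_right_cancel₀ hkl (hc k l)).trans (mul_right_cancel₀ hij (hc i j)).symm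

theorem repr_eq_zero_of_plucker_eq_zero [NoZeroDivisors R] {x y : V} {i j k : κ}
    (hij : b.plucker x y i j ≠ 0) (hik : b.plucker x y i k = 0) (hjk : b.plucker x y j k = 0) :
    b.repr x k = 0 ∧ b.repr y k = 0 := by
  unfold plucker at *
  constructor
  · refine (mul_eq_zero.mp ?_).resolve_left hij
    linear_combination b.repr x j * hik - b.repr x i * hjk
  · refine (mul_eq_zero.mp ?_).resolve_left hij
    linear_combination b.repr y j * hik - b.repr y i * hjk

theorem span_pair_le_of_plucker_eq_zero [NoZeroDivisors R] {x y : V} {i j : κ}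
    (hij : b.plucker x y i j ≠ 0)
    (h : ∀ k, k ≠ i → k ≠ j → b.plucker x y i k = 0 ∧ b.plucker x y j k = 0) :
    Submodule.span R {x, y} ≤ Submodule.span R {b i, b j} := by
  have hsupp (v : V) (hv : ∀ k, k ≠ i → k ≠ j → b.repr v k = 0) :
      v ∈ Submodule.span R {b i, b j} := by
    rw [← Set.image_pair, b.mem_span_image]
    intro k hk
    by_contra hk'
    simp only [Set.mem_insert_iff, Set.mem_singleton_iff, not_or] at hk'
    exact (Finsupp.mem_support_iff.mp hk) (hv k hk'.1 hk'.2)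
  have hvanish k (hki : k ≠ i) (hkj : k ≠ j) :=
    b.repr_eq_zero_of_plucker_eq_zero hij (h k hki hkj).1 (h k hki hkj).2
  rw [Submodule.span_le, Set.insert_subset_iff, Set.singleton_subset_iff]
  exact ⟨hsupp x fun k hki hkj => (hvanish k hki hkj).1,
    hsupp y fun k hki hkj => (hvanish k hki hkj).2⟩

end CommRing

theorem exists_plucker_ne_zero {κ K V : Type*} [LinearOrder κ] [Field K] [AddCommGroup V]
    [Module K V] (b : Basis κ K V) {x y : V} (h : LinearIndependent K ![x, y]) :
    ∃ i j, i < j ∧ b.plucker x y i j ≠ 0 := by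
  by_contra! hzero
  have hall (k l : κ) : b.plucker x y k l = 0 := by
    rcases lt_trichotomy k l with hkl | rfl | hkl
    · exact hzero k l hkl
    · simp [plucker]
    · rw [plucker, ← neg_sub, neg_eq_zero]; exact hzero l k hkl
  obtain ⟨k, hk⟩ : ∃ k, b.repr x k ≠ 0 := by
    by_contra! hx
    exact one_ne_zero (LinearIndependent.pair_iff.mp h 1 0 (by simp [b.ext_elem_iff, hx])).1
  refine hk ((LinearIndependent.pair_iff.mp h (b.repr y k) (-b.repr x k) ?_).2 |> neg_eq_zero.mp)
  refine b.ext_elem fun l => ?_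
  simp only [map_add, map_smul, Finsupp.add_apply, Finsupp.smul_apply, smul_eq_mul, map_zero,
    Finsupp.coe_zero, Pi.zero_apply]
  have hkl := hall k l
  rw [plucker] at hkl
  linear_combination -hkl

end Module.Basis

theorem Complex.two_zpow_injective : Function.Injective fun m : ℤ => (2 : ℂ) ^ m := by
  intro m₁ m₂ h
  have h' := congrArg norm h
  simp only [norm_zpow, Complex.norm_two] at h'
  exact zpow_right_injective₀ two_pos (by norm_num) h'

theorem finrank_span_pair_le {K V : Type*} [Ring K] [StrongRankCondition K] [AddCommGroup V]
    [Module K V] (u v : V) : Module.finrank K (Submodule.span K {u, v}) ≤ 2 := by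
  have h := finrank_range_le_card (R := K) ![u, v]
  rwa [Matrix.range_cons_cons_empty, Set.finrank, Fintype.card_fin] at h

theorem stmt_16_general (n : ℕ) (V : Type*) [AddCommGroup V] [Module ℂ V]
    (e : Module.Basis (Fin n) ℂ V) (w : Fin n → ℤ) (hw : Function.Injective w)
    (ρ : ℂˣ → V →ₗ[ℂ] V)
    (hρ : ∀ (t : ℂˣ) (i : Fin n), ρ t (e i) = ((t ^ w i : ℂˣ) : ℂ) • e i)
    (W : Submodule ℂ V) (hW : Module.finrank ℂ W = 2)
    (x y : V) (hxy : W = Submodule.span ℂ {x, y})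
    (hfix : ∀ t : ℂˣ, ∃ c : ℂ,
      ι ℂ (ρ t x) * ι ℂ (ρ t y) = c • (ι ℂ x * ι ℂ y)) :
    ∃ i j : Fin n, i < j ∧ W = Submodule.span ℂ {e i, e j} := by
  have hind : LinearIndependent ℂ ![x, y] := by
    rw [linearIndependent_iff_card_eq_finrank_span, Matrix.range_cons_cons_empty,
      Set.finrank, ← hxy, hW, Fintype.card_fin]
  obtain ⟨i, j, hij, hp⟩ := e.exists_plucker_ne_zero hind
  obtain ⟨c, hc⟩ := hfix (Units.mk0 2 two_ne_zero)
  have hweight {k l : Fin n} (hkl : e.plucker x y k l ≠ 0) : w k + w l = w i + w j := by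
    have h := e.mul_eq_mul_of_plucker_ne_zero (hρ _) hc hp hkl
    simp only [Units.val_zpow_eq_zpow_val, Units.val_mk0,
      ← zpow_add₀ (two_ne_zero : (2 : ℂ) ≠ 0)] at h
    exact Complex.two_zpow_injective h
  have : FiniteDimensional ℂ (Submodule.span ℂ {e i, e j}) :=
    FiniteDimensional.span_of_finite ℂ (Set.toFinite _)
  refine ⟨i, j, hij, Submodule.eq_of_le_of_finrank_le ?_ ?_⟩
  · rw [hxy]
    refine e.span_pair_le_of_plucker_eq_zero hp fun k hki hkj => ⟨?_, ?_⟩ <;> by_contra h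
    · exact hkj (hw (by linarith [hweight h]))
    · exact hki (hw (by linarith [hweight h]))
  · exact hW ▸ finrank_span_pair_le _ _

/-- Let `V` be `n`-dimensional over `ℂ` with basis `e` and a diagonal `ℂ*`-action with
pairwise distinct integer weights `w i` (so `t` acts by `e i ↦ t^(w i) • e i`). If every
integer occurs at most twice among the sums `w i + w j` (`i < j`), then any
2-dimensional subspace `W = span{x, y}` whose line `Λ²W` is fixed by the induced action
is a coordinate plane `span{e i, e j}`. -/
theorem stmt_16 (n : ℕ) (V : Type*) [AddCommGroup V] [Module ℂ V]
    (e : Module.Basis (Fin n) ℂ V) (w : Fin n → ℤ) (hw : Function.Injective w)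
    (hmult : ∀ m : ℤ,
      (Finset.univ.filter
        (fun q : Fin n × Fin n => q.1 < q.2 ∧ w q.1 + w q.2 = m)).card ≤ 2)
    (ρ : ℂˣ → V →ₗ[ℂ] V)
    (hρ : ∀ (t : ℂˣ) (i : Fin n), ρ t (e i) = ((t ^ w i : ℂˣ) : ℂ) • e i)
    (W : Submodule ℂ V) (hW : Module.finrank ℂ W = 2)
    (x y : V) (hxy : W = Submodule.span ℂ {x, y})
    (hfix : ∀ t : ℂˣ, ∃ c : ℂ,
      ι ℂ (ρ t x) * ι ℂ (ρ t y) = c • (ι ℂ x * ι ℂ y)) :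
    ∃ i j : Fin n, i < j ∧ W = Submodule.span ℂ {e i, e j} :=
  stmt_16_general n V e w hw ρ hρ W hW x y hxy hfix
end
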